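/- Let μ ∈ (0,1]. In ℝ⁹ with standard inner product, consider the four vectors f₁ = e_{1,0} − μ·e_{0,1}, f₂ = e_{1,−1} − (μ/2)·e_{0,0}, f₃ = (1/2)·e_{0,0} − μ·e_{−1,1}, f₄ = e_{0,−1} − μ·e_{−1,0}, and the five vectors g₂ = e_{1,1}, g₁ = μ·e_{1,0} + e_{0,1}, g₀ = μ²·e_{1,−1} + 2μ·e_{0,0} + e_{−1,1}, g₋₁ = μ·e_{0,−1} + e_{−1,0}, g₋₂ = e_{−1,−1}. Then ⟨g_m, f_i⟩ = 0 for all m ∈ {2,1,0,−1,−2} and i ∈ {1,2,3,4}, and the nine vectors f₁,…,f₄, g₂,…,g₋₂ together form a basis of ℝ⁹. -/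

import Mathlib

/-! The family is block diagonal for the total magnetization `m + m'`: the sectors `±2` hold the
single vectors `g_{±2}`, the sectors `±1` the pairs `(f₁, g₁)`, `(f₄, g₋₁)` with determinant
`1 + μ²`, and the sector `0` the triple `(f₂, f₃, g₀)` with determinant `(μ⁴ + 4μ² + 1)/2`.
These never vanish, so the nine vectors are independent for every real `μ`, hence a basis of
the 9-dimensional space. Orthogonality is a direct computation. -/

open Matrix

/-- The standard basis vector `e_{m,m'} = |m⟩⊗|m'⟩` of the two-site Hilbert space
`ℝ⁹ ≅ ℝ³⊗ℝ³` of a pair of spin-1's, where the index `0, 1, 2 : Fin 3` encodes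
`m = 1, 0, −1` respectively. -/
def e (a b : Fin 3) : Fin 3 × Fin 3 → ℝ := fun p => if p = (a, b) then 1 else 0

/-- The family consisting of the four two-site ground states
`f₁ = e_{1,0} − μ·e_{0,1}`, `f₂ = e_{1,−1} − (μ/2)·e_{0,0}`,
`f₃ = (1/2)·e_{0,0} − μ·e_{−1,1}`, `f₄ = e_{0,−1} − μ·e_{−1,0}` of the S=1
asymmetric VBS model followed by the five Witten-conjugated `S_tot = 2` vectors
`g₂ = e_{1,1}`, `g₁ = μ·e_{1,0} + e_{0,1}`, `g₀ = μ²·e_{1,−1} + 2μ·e_{0,0} + e_{−1,1}`,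
`g₋₁ = μ·e_{0,−1} + e_{−1,0}`, `g₋₂ = e_{−1,−1}`. -/
noncomputable def fam (μ : ℝ) : Fin 9 → (Fin 3 × Fin 3 → ℝ) :=
  ![e 0 1 - μ • e 1 0,
    e 0 2 - (μ / 2) • e 1 1,
    (1 / 2 : ℝ) • e 1 1 - μ • e 2 0,
    e 1 2 - μ • e 2 1,
    e 0 0,
    μ • e 0 1 + e 1 0,
    (μ ^ 2) • e 0 2 + (2 * μ) • e 1 1 + e 2 0,
    μ • e 1 2 + e 2 1,
    e 2 2]

lemma e_eq_single (a b : Fin 3) : e a b = Pi.single (a, b) 1 := by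
  funext p
  simp [e, Pi.single_apply]

lemma fam_dotProduct_eq_zero (μ : ℝ) (i j : Fin 9) (hi : 4 ≤ (i : ℕ)) (hj : (j : ℕ) < 4) :
    fam μ i ⬝ᵥ fam μ j = 0 := by
  fin_cases i <;> fin_cases j <;> simp at hi hj
  all_goals simp [fam, e_eq_single, dotProduct_sub, dotProduct_smul]
  ring

lemma eq_zero_of_sector_one {μ x y : ℝ} (h₁ : x + μ * y = 0) (h₂ : -(μ * x) + y = 0) :
    x = 0 ∧ y = 0 := by
  have hx : x * (1 + μ ^ 2) = 0 := by linear_combination h₁ - μ * h₂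
  have hx : x = 0 := (mul_eq_zero.mp hx).resolve_right (by positivity)
  exact ⟨hx, by linear_combination h₂ + μ * hx⟩

lemma eq_zero_of_sector_zero {μ x y z : ℝ} (h₁ : x + μ ^ 2 * z = 0)
    (h₂ : -(μ / 2 * x) + y / 2 + 2 * μ * z = 0) (h₃ : -(μ * y) + z = 0) :
    x = 0 ∧ y = 0 ∧ z = 0 := by
  have hy : y * (μ ^ 4 + 4 * μ ^ 2 + 1) = 0 := by
    linear_combination 2 * h₂ + μ * h₁ - (4 * μ + μ ^ 3) * h₃
  have hy : y = 0 := (mul_eq_zero.mp hy).resolve_right (by positivity)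
  have hz : z = 0 := by linear_combination h₃ + μ * hy
  exact ⟨by linear_combination h₁ - μ ^ 2 * hz, hy, hz⟩

lemma linearIndependent_fam (μ : ℝ) : LinearIndependent ℝ (fam μ) := by
  rw [Fintype.linearIndependent_iff]
  intro c hc
  have coord (a b : Fin 3) : (∑ i, c i • fam μ i) (a, b) = 0 := by rw [hc]; rfl
  have h00 := coord 0 0
  have h01 := coord 0 1
  have h02 := coord 0 2
  have h10 := coord 1 0
  have h11 := coord 1 1
  have h12 := coord 1 2
  have h20 := coord 2 0
  have h21 := coord 2 1
  have h22 := coord 2 2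
  simp [Fin.sum_univ_succ, fam, e_eq_single] at h00 h01 h02 h10 h11 h12 h20 h21 h22
  obtain ⟨hc0, hc5⟩ := eq_zero_of_sector_one (μ := μ) (x := c 0) (y := c 5)
    (by linear_combination h01) (by linear_combination h10)
  obtain ⟨hc3, hc7⟩ := eq_zero_of_sector_one (μ := μ) (x := c 3) (y := c 7)
    (by linear_combination h12) (by linear_combination h21)
  obtain ⟨hc1, hc2, hc6⟩ := eq_zero_of_sector_zero (μ := μ) (x := c 1) (y := c 2) (z := c 6)
    (by linear_combination h02) (by linear_combination h11) (by linear_combination h20)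
  intro i
  fin_cases i
  exacts [hc0, hc1, hc2, hc3, h00, hc5, hc6, hc7, h22]

theorem witten_conjugated_orthogonal_basis_general (μ : ℝ) :
    (∀ i : Fin 9, ∀ j : Fin 9, 4 ≤ (i : ℕ) → (j : ℕ) < 4 →
      fam μ i ⬝ᵥ fam μ j = 0) ∧
    LinearIndependent ℝ (fam μ) ∧
    Submodule.span ℝ (Set.range (fam μ)) = ⊤ :=
  ⟨fam_dotProduct_eq_zero μ, linearIndependent_fam μ,
    (linearIndependent_fam μ).span_eq_top_of_card_eq_finrank (by simp)⟩

/-- For `μ ∈ (0,1]`: each `g_m` is orthogonal to each `f_i`, and the nine vectors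
`f₁,…,f₄, g₂,…,g₋₂` together form a basis of `ℝ⁹`. -/
theorem witten_conjugated_orthogonal_basis (μ : ℝ) (hμ : 0 < μ) (hμ' : μ ≤ 1) :
    (∀ i : Fin 9, ∀ j : Fin 9, 4 ≤ (i : ℕ) → (j : ℕ) < 4 →
      fam μ i ⬝ᵥ fam μ j = 0) ∧
    LinearIndependent ℝ (fam μ) ∧
    Submodule.span ℝ (Set.range (fam μ)) = ⊤ :=
  witten_conjugated_orthogonal_basis_general μ
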